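/- Fix Ω > 0 and T > 0. For every ε > 0 and every bounded continuous x : ℝ → ℝ whose Fourier transform X is integrable, satisfies ‖X‖_{L¹} ≤ 1, and vanishes on (−Ω, Ω), there exist an integer d ≥ 1 and real coefficients a₁,…,a_d (depending on ε only, uniformly over any family with uniformly integrable Fourier tails) such that the function ŷ(t) = (1/2π) ∫ e^{iωt} (Σ_{k=1}^d a_k (iω)^{−k}) X(ω) dω satisfies sup_{t ∈ ℝ} |x(t+T) − ŷ(t)| ≤ ε. -/

import Mathlib

/-!
Substituting `u = ω⁻¹`, one has `(iω)⁻ᵏ = (-iu)ᵏ`, so the predictor's transfer function is a real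
polynomial in `-iu` without constant term, and `X` lives on `|u| ≤ Ω⁻¹`. The ideal multiplier
`e^{iωT} = e^{iT/u}` is not continuous at `u = 0`, so one approximates instead the damped multiplier
`F(u) = e^{iT/u} · S u² / (1 + S u²)`. It is continuous, vanishes at `0` and is Hermitian,
`F(-u) = conj F(u)`; Weierstrass applied to its real and imaginary parts, followed by
Hermitian symmetrization, gives real coefficients, and the constant term is dropped at the cost of
the error at `u = 0`. The damping costs `ω² / (ω² + S)`, which is small on `|ω| ≤ M` once `S` is
large, and at most `1` beyond `M`, where `X` has small `L¹` mass.
-/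

open MeasureTheory Filter Set Complex Polynomial ComplexConjugate Topology Real

lemma exists_polynomial_near_of_continuousOn_complex {a b δ : ℝ} (hδ : 0 < δ) {F : ℝ → ℂ}
    (hF : ContinuousOn F (Icc a b)) :
    ∃ p : ℂ[X], ∀ u ∈ Icc a b, ‖p.eval (u : ℂ) - F u‖ ≤ δ := by
  obtain ⟨P, hP⟩ := exists_polynomial_near_of_continuousOn a b (fun u => (F u).re)
    (continuous_re.comp_continuousOn hF) (δ / 2) (half_pos hδ)
  obtain ⟨Q, hQ⟩ := exists_polynomial_near_of_continuousOn a b (fun u => (F u).im)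
    (continuous_im.comp_continuousOn hF) (δ / 2) (half_pos hδ)
  refine ⟨P.map ofRealHom + C I * Q.map ofRealHom, fun u hu => ?_⟩
  have heval (R : ℝ[X]) : (R.map ofRealHom).eval (u : ℂ) = R.eval u := by
    rw [eval_map]; exact eval₂_at_apply ofRealHom u
  calc _ ≤ |(_ : ℂ).re| + |(_ : ℂ).im| := norm_le_abs_re_add_abs_im _
    _ ≤ δ / 2 + δ / 2 := by
      gcongr
      · simpa [heval] using (hP u hu).le
      · simpa [heval] using (hQ u hu).le
    _ = δ := add_halves δ

lemma ofReal_re_I_pow_mul_mul_neg_I_mul_pow (s : ℂ) (u : ℝ) (k : ℕ) :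
    ((I ^ k * s).re : ℂ) * (-(I * u)) ^ k = (s * u ^ k + conj (s * (-u : ℂ) ^ k)) / 2 := by
  rw [re_eq_add_conj]
  simp only [map_mul, map_pow, conj_I, conj_ofReal, map_neg]
  have h1 : (I * -I) ^ k = 1 := by simp
  have h2 : (-I * -I) ^ k = (-1) ^ k := by simp
  have h3 : ((-1 : ℂ) ^ k) ^ 2 = 1 := by rw [← pow_mul, mul_comm, pow_mul, neg_one_sq, one_pow]
  linear_combination (s * u ^ k / 2) * h1 + (conj s * u ^ k / 2) * h2
    + (I ^ (2 * k) * conj s * u ^ k / 2) * h3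

lemma exists_real_poly_neg_I_mul_near {c δ : ℝ} (hc : 0 ≤ c) (hδ : 0 < δ) {F : ℝ → ℂ}
    (hF : ContinuousOn F (Icc (-c) c)) (hF0 : F 0 = 0) (hconj : ∀ u, F (-u) = conj (F u)) :
    ∃ d : ℕ, 1 ≤ d ∧ ∃ a : ℕ → ℝ, ∀ u ∈ Icc (-c) c,
      ‖∑ k ∈ Finset.Icc 1 d, (a k : ℂ) * (-(I * u)) ^ k - F u‖ ≤ δ := by
  obtain ⟨p, hp⟩ := exists_polynomial_near_of_continuousOn_complex (half_pos hδ) hF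
  set d := p.natDegree + 1
  -- With these coefficients `∑ a k (-iu)^k` is the Hermitian part `(p(u) + conj p(-u)) / 2` of `p`.
  set a : ℕ → ℝ := fun k => (I ^ k * p.coeff k).re
  have hsym (u : ℝ) : ∑ k ∈ Finset.range (d + 1), (a k : ℂ) * (-(I * u)) ^ k
      = (p.eval (u : ℂ) + conj (p.eval (-u : ℂ))) / 2 := by
    simp only [a, ofReal_re_I_pow_mul_mul_neg_I_mul_pow,
      eval_eq_sum_range' (by omega : p.natDegree < d + 1), map_sum, ← Finset.sum_add_distrib,
      Finset.sum_div]
  have hsym_near : ∀ u ∈ Icc (-c) c,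
      ‖∑ k ∈ Finset.range (d + 1), (a k : ℂ) * (-(I * u)) ^ k - F u‖ ≤ δ / 2 := by
    intro u hu
    have hneg : -u ∈ Icc (-c) c := ⟨neg_le_neg hu.2, by linarith [hu.1]⟩
    have hsplit : (p.eval (u : ℂ) + conj (p.eval (-u : ℂ))) / 2 - F u
        = ((p.eval (u : ℂ) - F u) + conj (p.eval ((-u : ℝ) : ℂ) - F (-u))) / 2 := by
      rw [hconj, map_sub, conj_conj]; push_cast; ring
    rw [hsym, hsplit, norm_div, RCLike.norm_ofNat, div_le_div_iff_of_pos_right two_pos]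
    calc _ ≤ _ := norm_add_le _ _
      _ ≤ δ / 2 + δ / 2 := by rw [RCLike.norm_conj]; exact add_le_add (hp u hu) (hp (-u) hneg)
      _ = δ := add_halves δ
  -- `F 0 = 0`, so the constant term is itself within `δ / 2` of zero and may be dropped.
  have hconst : ‖(a 0 : ℂ)‖ ≤ δ / 2 := by
    simpa [hF0, Finset.sum_range_succ', d] using hsym_near 0 ⟨neg_nonpos.2 hc, hc⟩
  refine ⟨d, Nat.le_add_left 1 _, a, fun u hu => ?_⟩
  have hdrop : ∑ k ∈ Finset.range (d + 1), (a k : ℂ) * (-(I * u)) ^ k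
      = a 0 + ∑ k ∈ Finset.Icc 1 d, (a k : ℂ) * (-(I * u)) ^ k := by
    rw [Nat.range_succ_eq_Icc_zero, ← Finset.add_sum_Ioc_eq_sum_Icc d.zero_le,
      ← Finset.Icc_add_one_left_eq_Ioc, zero_add, pow_zero, mul_one]
  calc _ = ‖(∑ k ∈ Finset.range (d + 1), (a k : ℂ) * (-(I * u)) ^ k - F u) - a 0‖ := by
        rw [hdrop]; congr 1; ring
    _ ≤ δ / 2 + δ / 2 := norm_sub_le_of_le (hsym_near u hu) hconst
    _ = δ := add_halves δ

lemma norm_exp_I_mul_ofReal_mul_ofReal (ω t : ℝ) : ‖cexp (I * ω * t)‖ = 1 := by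
  rw [show I * ω * t = ↑(ω * t) * I by push_cast; ring, norm_exp_ofReal_mul_I]

noncomputable def damping (S u : ℝ) : ℝ := S * u ^ 2 / (1 + S * u ^ 2)

/-- In the frequency variable `ω = u⁻¹` this is `e^{iωT} · S / (S + ω²)`, the damped prediction
multiplier; in the variable `u` it is continuous at `u = 0`, where `T / 0 = 0` is harmless because
`damping S 0 = 0`. -/
noncomputable def dampedExp (T S u : ℝ) : ℂ := cexp (↑(T / u) * I) * damping S u

section damping

variable {S : ℝ}

lemma damping_nonneg (hS : 0 ≤ S) (u : ℝ) : 0 ≤ damping S u := by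
  unfold damping; positivity

lemma damping_le_one (hS : 0 ≤ S) (u : ℝ) : damping S u ≤ 1 :=
  div_le_one_of_le₀ (le_add_of_nonneg_left zero_le_one) (by positivity)

lemma continuous_damping (hS : 0 ≤ S) : Continuous (damping S) :=
  Continuous.div (by fun_prop) (by fun_prop) fun u => by positivity

@[simp] lemma damping_zero : damping S 0 = 0 := by simp [damping]

@[simp] lemma damping_neg (u : ℝ) : damping S (-u) = damping S u := by simp [damping]

lemma one_sub_damping_inv (hS : 0 ≤ S) {ω : ℝ} (hω : ω ≠ 0) :
    1 - damping S ω⁻¹ = ω ^ 2 / (ω ^ 2 + S) := by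
  unfold damping
  field_simp
  ring

lemma one_sub_damping_inv_le (hS : 0 < S) {ω : ℝ} (hω : ω ≠ 0) (M : ℝ) :
    1 - damping S ω⁻¹ ≤ (Icc (-M) M)ᶜ.indicator 1 ω + M ^ 2 / S := by
  by_cases hM : ω ∈ Icc (-M) M
  · rw [indicator_of_notMem (notMem_compl_iff.2 hM), zero_add, one_sub_damping_inv hS.le hω]
    calc ω ^ 2 / (ω ^ 2 + S) ≤ ω ^ 2 / S := by gcongr; nlinarith
      _ ≤ M ^ 2 / S := by gcongr ?_ / _; exact sq_le_sq' hM.1 hM.2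
  · rw [indicator_of_mem hM, Pi.one_apply]
    linarith [damping_nonneg hS.le ω⁻¹, div_nonneg (sq_nonneg M) hS.le]

end damping

section dampedExp

variable {T S : ℝ}

lemma norm_dampedExp (hS : 0 ≤ S) (u : ℝ) : ‖dampedExp T S u‖ = damping S u := by
  rw [dampedExp, norm_mul, norm_exp_ofReal_mul_I, one_mul, norm_real,
    Real.norm_of_nonneg (damping_nonneg hS u)]

@[simp] lemma dampedExp_zero : dampedExp T S 0 = 0 := by simp [dampedExp]

lemma dampedExp_neg (u : ℝ) : dampedExp T S (-u) = conj (dampedExp T S u) := by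
  simp only [dampedExp, damping_neg, map_mul, ← exp_conj, conj_ofReal, conj_I, div_neg,
    ofReal_neg]
  ring_nf

lemma continuous_dampedExp (hS : 0 ≤ S) : Continuous (dampedExp T S) := by
  refine continuous_iff_continuousAt.2 fun u => ?_
  rcases eq_or_ne u 0 with rfl | hu
  · have hlim : Tendsto (damping S) (𝓝 0) (𝓝 0) := by
      simpa using (continuous_damping hS).tendsto 0
    rw [ContinuousAt, dampedExp_zero]
    exact squeeze_zero_norm (fun u => (norm_dampedExp hS u).le) hlim
  · have := (continuous_damping hS).continuousAt (x := u)
    unfold dampedExp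
    fun_prop (disch := assumption)

lemma dampedExp_inv (ω : ℝ) :
    dampedExp T S ω⁻¹ = cexp (I * ω * T) * damping S ω⁻¹ := by
  rw [dampedExp, div_inv_eq_mul]; push_cast; ring_nf

lemma norm_exp_sub_le (hS : 0 < S) {ω : ℝ} (hω : ω ≠ 0) (M : ℝ) (z : ℂ) :
    ‖cexp (I * ω * T) - z‖
      ≤ (Icc (-M) M)ᶜ.indicator 1 ω + M ^ 2 / S + ‖dampedExp T S ω⁻¹ - z‖ := by
  calc ‖cexp (I * ω * T) - z‖
      = ‖cexp (I * ω * T) * ↑(1 - damping S ω⁻¹) + (dampedExp T S ω⁻¹ - z)‖ := by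
        rw [dampedExp_inv]; push_cast; ring_nf
    _ ≤ (1 - damping S ω⁻¹) + ‖dampedExp T S ω⁻¹ - z‖ := by
      grw [norm_add_le, norm_mul, norm_exp_I_mul_ofReal_mul_ofReal, one_mul, norm_real,
        Real.norm_of_nonneg (sub_nonneg.2 (damping_le_one hS.le _))]
    _ ≤ _ := by grw [one_sub_damping_inv_le hS hω M]

end dampedExp

lemma exists_setIntegral_compl_Icc_le {f : ℝ → ℝ} (hf : Integrable f) {η : ℝ} (hη : 0 < η) :
    ∃ M > 0, ∫ x in (Icc (-M) M)ᶜ, f x ≤ η := by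
  have hcover : AECover volume atTop fun M : ℝ => Icc (-M) M :=
    aecover_Icc tendsto_neg_atTop_atBot tendsto_id
  have hlim := hcover.integral_tendsto_of_countably_generated hf
  obtain ⟨M, hclose, hpos⟩ :=
    ((hlim.eventually (lt_mem_nhds (sub_lt_self _ hη))).and (eventually_gt_atTop 0)).exists
  exact ⟨M, hpos, by linarith [integral_add_compl (measurableSet_Icc (a := -M) (b := M)) hf]⟩

lemma norm_integral_sub_integral_le {α E : Type*} [MeasurableSpace α] [NormedAddCommGroup E]
    [NormedSpace ℝ E] {μ : Measure α} {f g : α → E} {B : α → ℝ} (hf : Integrable f μ)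
    (hg : AEStronglyMeasurable g μ) (hB : Integrable B μ) (h : ∀ a, ‖f a - g a‖ ≤ B a) :
    ‖∫ a, f a ∂μ - ∫ a, g a ∂μ‖ ≤ ∫ a, B a ∂μ := by
  have hfg : Integrable (f - g) μ := hB.mono' (hf.1.sub hg) (ae_of_all _ h)
  have hg' : Integrable g μ := by simpa using hf.sub hfg
  rw [← integral_sub hf hg']
  exact norm_integral_le_of_norm_le hB (ae_of_all _ h)

lemma I_mul_zpow_neg_natCast (ω : ℝ) (k : ℕ) :
    (I * ω) ^ (-(k : ℤ)) = (-(I * ↑ω⁻¹)) ^ k := by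
  rw [zpow_neg, zpow_natCast, ← inv_pow, mul_inv, inv_I, ofReal_inv]; ring

lemma inv_mem_Icc_of_le_abs {Ω ω : ℝ} (hΩ : 0 < Ω) (hω : Ω ≤ |ω|) : ω⁻¹ ∈ Icc (-Ω⁻¹) Ω⁻¹ :=
  abs_le.1 (by rw [abs_inv]; exact inv_anti₀ hΩ hω)

lemma integrable_exp_I_mul_mul {X : ℝ → ℂ} (hX : Integrable X) (t : ℝ) :
    Integrable fun ω : ℝ => cexp (I * ω * t) * X ω :=
  hX.bdd_mul (by fun_prop) (ae_of_all _ fun ω => (norm_exp_I_mul_ofReal_mul_ofReal ω t).le)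

lemma norm_integral_mul_sub_integral_mul_le {E ψ X : ℝ → ℂ} {s : Set ℝ} {η : ℝ}
    (hX : Integrable X) (hEX : Integrable fun ω => E ω * X ω) (hψ : AEStronglyMeasurable ψ)
    (hs : MeasurableSet s) (hη : 0 ≤ η)
    (hEψ : ∀ ω, X ω ≠ 0 → ‖E ω - ψ ω‖ ≤ η + s.indicator 1 ω) :
    ‖(∫ ω, E ω * X ω) - ∫ ω, ψ ω * X ω‖ ≤ η * (∫ ω, ‖X ω‖) + ∫ ω in s, ‖X ω‖ := by
  have hB : Integrable fun ω => η * ‖X ω‖ + s.indicator (‖X ·‖) ω :=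
    (hX.norm.const_mul η).add (hX.norm.indicator hs)
  have hψX : AEStronglyMeasurable fun ω => ψ ω * X ω := hψ.mul hX.1
  refine (norm_integral_sub_integral_le hEX hψX hB fun ω => ?_).trans_eq ?_
  · rcases eq_or_ne (X ω) 0 with hXω | hXω
    · rw [hXω, mul_zero, mul_zero, sub_zero, norm_zero]
      exact add_nonneg (by positivity) (indicator_nonneg (fun _ _ => norm_nonneg _) _)
    calc ‖E ω * X ω - ψ ω * X ω‖ = ‖E ω - ψ ω‖ * ‖X ω‖ := by rw [← sub_mul, norm_mul]
      _ ≤ (η + s.indicator 1 ω) * ‖X ω‖ := by gcongr; exact hEψ ω hXω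
      _ = η * ‖X ω‖ + s.indicator (‖X ·‖) ω := by
        by_cases hω : ω ∈ s <;> simp [hω, add_mul]
  · rw [integral_add (hX.norm.const_mul η) (hX.norm.indicator hs), integral_const_mul,
      integral_indicator hs]

theorem stmt13_general
    (Ω T : ℝ) (hΩ : 0 < Ω)
    (ε : ℝ) (hε : 0 < ε)
    (x : ℝ → ℝ)
    (X : ℝ → ℂ) (hX_int : Integrable X)
    (hX_norm : (∫ ω, ‖X ω‖) ≤ 1)
    (hgap : ∀ ω : ℝ, |ω| < Ω → X ω = 0)
    (hinv : ∀ t : ℝ, (x t : ℂ) =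
      (1 / (2 * Real.pi)) * ∫ ω : ℝ, Complex.exp (Complex.I * ω * t) * X ω) :
    ∃ d : ℕ, 1 ≤ d ∧ ∃ a : ℕ → ℝ,
      ∀ t : ℝ,
        ‖(x (t + T) : ℂ) - (1 / (2 * Real.pi)) *
            ∫ ω : ℝ, Complex.exp (Complex.I * ω * t) *
              (∑ k ∈ Finset.Icc 1 d, (a k : ℂ) * (Complex.I * ω) ^ (-(k : ℤ))) * X ω‖
          ≤ ε := by
  have hπε : 0 < π * ε := by positivity
  obtain ⟨M, hM, htail⟩ := exists_setIntegral_compl_Icc_le hX_int.norm hπε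
  -- `S` is large enough that the damping error `ω² / (ω² + S)` is `≤ πε/2` on `|ω| ≤ M`.
  set S := 2 * M ^ 2 / (π * ε)
  have hS : 0 < S := by positivity
  have hMS : M ^ 2 / S = π * ε / 2 := by simp only [S]; field_simp
  obtain ⟨d, hd, a, happrox⟩ := exists_real_poly_neg_I_mul_near (inv_nonneg.2 hΩ.le)
    (half_pos hπε) (continuous_dampedExp (T := T) hS.le).continuousOn dampedExp_zero dampedExp_neg
  refine ⟨d, hd, a, fun t => ?_⟩
  set ψ : ℝ → ℂ := fun ω => ∑ k ∈ Finset.Icc 1 d, (a k : ℂ) * (I * ω) ^ (-(k : ℤ))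
  have hmult (ω : ℝ) (hXω : X ω ≠ 0) :
      ‖cexp (I * ω * ↑(t + T)) - cexp (I * ω * t) * ψ ω‖
        ≤ π * ε + (Icc (-M) M)ᶜ.indicator 1 ω := by
    have hω : Ω ≤ |ω| := not_lt.1 (mt (hgap ω) hXω)
    have hψ : ‖dampedExp T S ω⁻¹ - ψ ω‖ ≤ π * ε / 2 := by
      rw [norm_sub_rev]
      simpa only [ψ, I_mul_zpow_neg_natCast] using happrox ω⁻¹ (inv_mem_Icc_of_le_abs hΩ hω)
    rw [ofReal_add, mul_add, Complex.exp_add, ← mul_sub, norm_mul,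
      norm_exp_I_mul_ofReal_mul_ofReal, one_mul]
    grw [norm_exp_sub_le hS (abs_pos.1 (hΩ.trans_le hω)) M, hψ, hMS]
    linarith
  have hdiff := norm_integral_mul_sub_integral_mul_le hX_int
    (integrable_exp_I_mul_mul hX_int (t + T)) (by fun_prop) measurableSet_Icc.compl hπε.le hmult
  rw [hinv, ← mul_sub, norm_mul]
  calc _ ≤ ‖(1 / (2 * π) : ℂ)‖ * (π * ε * 1 + π * ε) := by
        grw [hdiff, hX_norm, htail]
    _ = ε := by norm_num [abs_of_pos pi_pos]; field_simp; ring

theorem stmt13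
    (Ω T : ℝ) (hΩ : 0 < Ω) (hT : 0 < T)
    (ε : ℝ) (hε : 0 < ε)
    (x : ℝ → ℝ) (hx_cont : Continuous x) (hx_bdd : ∃ C, ∀ t, |x t| ≤ C)
    (X : ℝ → ℂ) (hX_int : Integrable X)
    (hX_norm : (∫ ω, ‖X ω‖) ≤ 1)
    (hgap : ∀ ω : ℝ, |ω| < Ω → X ω = 0)
    (hinv : ∀ t : ℝ, (x t : ℂ) =
      (1 / (2 * Real.pi)) * ∫ ω : ℝ, Complex.exp (Complex.I * ω * t) * X ω) :
    ∃ d : ℕ, 1 ≤ d ∧ ∃ a : ℕ → ℝ,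
      ∀ t : ℝ,
        ‖(x (t + T) : ℂ) - (1 / (2 * Real.pi)) *
            ∫ ω : ℝ, Complex.exp (Complex.I * ω * t) *
              (∑ k ∈ Finset.Icc 1 d, (a k : ℂ) * (Complex.I * ω) ^ (-(k : ℤ))) * X ω‖
          ≤ ε :=
  stmt13_general Ω T hΩ ε hε x X hX_int hX_norm hgap hinv
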